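/- arXiv:2007.07194 — 2 statements merged into one kernel-verified Lean document; each statement's English description precedes it below -/
import Mathlib

section
/- Let (N, σ_N) be a closed Riemannian manifold, ξ(t) = √(t²+2), and let M = ℝ ×_ξ N be the warped product with metric dt² + ξ(t)²σ_N, dim M = m. Define φ(t) = t/√(1+t²) and u(t,y) = ∫₀ᵗ φ^{−1}(ξ(τ)^{−(m−1)}) dτ. Then u is a well-defined smooth function on M (since ξ > 1 so ξ^{1−m} < 1) and u solves the minimal surface equation div(Du/√(1+|Du|²)) = 0 on M. Moreover, u is bounded on M if and only if m ≥ 3. -/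
/-!
With `u' = φ⁻¹(ξ^{1-m})` the flux `ξ^{m-1} φ(u')` is identically `1`. Since
`φ⁻¹(s) = (s⁻² - 1)^{-1/2}`, the slope is `u'(t) = ((t² + 2)^{m-1} - 1)^{-1/2}`. For `m = 2` this is
`(1 + t²)^{-1/2}`, whose primitive `arsinh` is unbounded; for `m ≥ 3` it is dominated by the
integrable function `(1 + t²)⁻¹`.
-/

open Real MeasureTheory

theorem div_sqrt_one_sub_sq_div_sqrt_one_add_sq {s : ℝ} (hs : s ^ 2 < 1) :
    s / √(1 - s ^ 2) / √(1 + (s / √(1 - s ^ 2)) ^ 2) = s := by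
  have hpos : 0 < 1 - s ^ 2 := by linarith
  have h : 1 + (s / √(1 - s ^ 2)) ^ 2 = (1 - s ^ 2)⁻¹ := by
    rw [div_pow, sq_sqrt hpos.le]
    field_simp
    ring
  rw [h, sqrt_inv, div_inv_eq_mul, div_mul_cancel₀ _ (sqrt_pos.mpr hpos).ne']

theorem div_sqrt_one_sub_sq_eq_inv_sqrt {s : ℝ} (hs : 0 < s) :
    s / √(1 - s ^ 2) = (√(s⁻¹ ^ 2 - 1))⁻¹ := by
  have h : s⁻¹ ^ 2 - 1 = (1 - s ^ 2) / s ^ 2 := by field_simp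
  rw [h, sqrt_div' _ (sq_nonneg s), sqrt_sq hs.le, inv_div]

/-- `φ⁻¹(ξ(t)^{-p})` for `ξ(t) = √(t² + 2)`, in closed form (see `radialSlope_eq`). -/
noncomputable def radialSlope (p t : ℝ) : ℝ := (√((t ^ 2 + 2) ^ p - 1))⁻¹

theorem radialSlope_eq (p t : ℝ) :
    radialSlope p t = √(t ^ 2 + 2) ^ (-p) / √(1 - (√(t ^ 2 + 2) ^ (-p)) ^ 2) := by
  have hx : 0 < t ^ 2 + 2 := by positivity
  rw [div_sqrt_one_sub_sq_eq_inv_sqrt (rpow_pos_of_pos (sqrt_pos.mpr hx) _),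
    rpow_neg (sqrt_nonneg _), inv_inv, rpow_pow_comm (sqrt_nonneg _), sq_sqrt hx.le, radialSlope]

theorem one_lt_sqrt_sq_add_two (t : ℝ) : 1 < √(t ^ 2 + 2) :=
  lt_sqrt_of_sq_lt (by nlinarith [sq_nonneg t])

theorem one_lt_sq_add_two_rpow {p : ℝ} (hp : 0 < p) (t : ℝ) : 1 < (t ^ 2 + 2) ^ p :=
  one_lt_rpow (by nlinarith [sq_nonneg t]) hp

theorem continuous_radialSlope {p : ℝ} (hp : 0 < p) : Continuous (radialSlope p) := by
  have : Continuous fun t : ℝ => (t ^ 2 + 2) ^ p :=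
    (by fun_prop : Continuous fun t : ℝ => t ^ 2 + 2).rpow_const fun _ => Or.inr hp.le
  refine Continuous.inv₀ (by fun_prop) fun t => ?_
  exact (sqrt_pos.mpr (sub_pos.mpr (one_lt_sq_add_two_rpow hp t))).ne'

theorem radialSlope_le {p : ℝ} (hp : 2 ≤ p) (t : ℝ) : radialSlope p t ≤ (1 + t ^ 2)⁻¹ := by
  have hsq : (1 + t ^ 2) ^ 2 ≤ (t ^ 2 + 2) ^ p - 1 := calc
    (1 + t ^ 2) ^ 2 ≤ (t ^ 2 + 2) ^ (2 : ℝ) - 1 := by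
      rw [rpow_two]; nlinarith [sq_nonneg t]
    _ ≤ (t ^ 2 + 2) ^ p - 1 := by
      gcongr
      nlinarith [sq_nonneg t]
  exact inv_anti₀ (by positivity) (le_sqrt_of_sq_le hsq)

theorem integrable_radialSlope {p : ℝ} (hp : 2 ≤ p) : Integrable (radialSlope p) := by
  refine integrable_inv_one_add_sq.mono'
    (continuous_radialSlope (by linarith)).aestronglyMeasurable (.of_forall fun t => ?_)
  exact (norm_of_nonneg (inv_nonneg.mpr (sqrt_nonneg _))).trans_le (radialSlope_le hp t)

theorem radialSlope_one (t : ℝ) : radialSlope 1 t = (√(1 + t ^ 2))⁻¹ := by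
  rw [radialSlope, rpow_one]; ring_nf

theorem integral_radialSlope_one (t : ℝ) : ∫ τ in (0 : ℝ)..t, radialSlope 1 τ = arsinh t := by
  rw [intervalIntegral.integral_eq_sub_of_hasDerivAt (f := arsinh)
    (fun x _ => by rw [radialSlope_one]; exact hasDerivAt_arsinh x)
    ((continuous_radialSlope one_pos).intervalIntegrable _ _), arsinh_zero, sub_zero]

theorem norm_intervalIntegral_le_integral_norm {E : Type*} [NormedAddCommGroup E]
    [NormedSpace ℝ E] {f : ℝ → E} (hf : Integrable f) (a b : ℝ) :
    ‖∫ x in a..b, f x‖ ≤ ∫ x, ‖f x‖ :=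
  intervalIntegral.norm_integral_le_integral_norm_uIoc.trans
    (setIntegral_le_integral hf.norm (.of_forall fun _ => norm_nonneg _))

theorem not_exists_forall_abs_arsinh_le : ¬∃ B : ℝ, ∀ t, |arsinh t| ≤ B := by
  rintro ⟨B, hB⟩
  have := hB (sinh (B + 1))
  rw [arsinh_sinh] at this
  linarith [le_abs_self (B + 1)]

theorem exists_forall_abs_integral_radialSlope_le_iff {m : ℕ} (hm : 2 ≤ m) :
    (∃ B : ℝ, ∀ t, |∫ τ in (0 : ℝ)..t, radialSlope ((m : ℝ) - 1) τ| ≤ B) ↔ 3 ≤ m := by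
  obtain rfl | hm3 := hm.eq_or_lt
  · norm_num [integral_radialSlope_one, not_exists_forall_abs_arsinh_le]
  · have hp : 2 ≤ (m : ℝ) - 1 := by
      have : (3 : ℝ) ≤ m := by exact_mod_cast hm3
      linarith
    exact iff_of_true
      ⟨_, norm_intervalIntegral_le_integral_norm (integrable_radialSlope hp) 0⟩ hm3

/-- On the warped product `M = ℝ ×_ξ N` with `ξ(t) = √(t²+2)` and
`dim M = m`, the radial function `u(t) = ∫₀ᵗ φ⁻¹(ξ(τ)^{1−m}) dτ` (where
`φ(t) = t/√(1+t²)`, `φ⁻¹(s) = s/√(1−s²)`) is well defined (since `ξ(τ)^{1−m} < 1`),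
its flux `ξ^{m−1}·u'/√(1+u'²) ≡ 1` is constant so `u` solves the minimal surface
equation `ξ^{1−m}(ξ^{m−1} φ(u'))' = 0`, and `u` is bounded iff `m ≥ 3`. -/
theorem warped_product_minimal_graph_example (m : ℕ) (hm : 2 ≤ m)
    (ξ : ℝ → ℝ) (hξ : ∀ t, ξ t = Real.sqrt (t ^ 2 + 2))
    (φinv : ℝ → ℝ) (hφinv : ∀ s, φinv s = s / Real.sqrt (1 - s ^ 2))
    (u : ℝ → ℝ) (hu : ∀ t, u t = ∫ τ in (0 : ℝ)..t, φinv (ξ τ ^ ((1 : ℝ) - m))) :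
    (∀ t : ℝ, ξ t ^ ((1 : ℝ) - m) < 1 ∧ HasDerivAt u (φinv (ξ t ^ ((1 : ℝ) - m))) t) ∧
    (∀ t : ℝ, deriv u t / Real.sqrt (1 + deriv u t ^ 2) = ξ t ^ ((1 : ℝ) - m)) ∧
    (∀ t : ℝ, HasDerivAt
      (fun s => ξ s ^ ((m : ℝ) - 1) * (deriv u s / Real.sqrt (1 + deriv u s ^ 2))) 0 t) ∧
    ((∃ B : ℝ, ∀ t, |u t| ≤ B) ↔ 3 ≤ m) := by
  have hp : (0 : ℝ) < m - 1 := by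
    have : (2 : ℝ) ≤ m := by exact_mod_cast hm
    linarith
  have hξ1 (t : ℝ) : 1 < ξ t := hξ t ▸ one_lt_sqrt_sq_add_two t
  have hs_pos (t : ℝ) : 0 < ξ t ^ ((1 : ℝ) - m) := rpow_pos_of_pos (one_pos.trans (hξ1 t)) _
  have hs_lt (t : ℝ) : ξ t ^ ((1 : ℝ) - m) < 1 :=
    rpow_lt_one_of_one_lt_of_neg (hξ1 t) (by linarith)
  have hslope (t : ℝ) : φinv (ξ t ^ ((1 : ℝ) - m)) = radialSlope (m - 1) t := by
    rw [hφinv, hξ, ← neg_sub, radialSlope_eq]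
  have hderiv (t : ℝ) : HasDerivAt u (φinv (ξ t ^ ((1 : ℝ) - m))) t := by
    rw [funext hu]
    simp_rw [hslope]
    exact ((continuous_radialSlope hp).integral_hasStrictDerivAt 0 t).hasDerivAt
  have hφ (t : ℝ) : deriv u t / √(1 + deriv u t ^ 2) = ξ t ^ ((1 : ℝ) - m) := by
    rw [(hderiv t).deriv, hφinv]
    exact div_sqrt_one_sub_sq_div_sqrt_one_add_sq
      (pow_lt_one₀ (hs_pos t).le (hs_lt t) two_ne_zero)
  refine ⟨fun t => ⟨hs_lt t, hderiv t⟩, hφ, fun t => ?_, ?_⟩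
  · have hflux : (fun s => ξ s ^ ((m : ℝ) - 1) * (deriv u s / √(1 + deriv u s ^ 2))) = 1 := by
      ext s
      rw [hφ, ← rpow_add (one_pos.trans (hξ1 s)), sub_add_sub_cancel', sub_self, rpow_zero,
        Pi.one_apply]
    rw [hflux]
    exact hasDerivAt_const t 1
  · simp_rw [hu, hslope]
    exact exists_forall_abs_integral_radialSlope_le_iff hm
end

section
/- Let g ∈ C^∞([0,∞)) solve g'' = κ²(1+r²)^{α/2} g with g(0) = 0, g'(0) = 1, where κ > 0 and α ≥ −2. If α > −2, then log g(r)/r^{1+α/2} → 2κ/(2+α) as r → ∞; if α = −2, then log g(r)/log r → κ̄ as r → ∞, where κ̄ = (1+√(1+4κ²))/2. -/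
/-!
The logarithmic derivative `h = g' / g` of the (positive) solution solves the Riccati equation
`h' = q - h²` with `q r = κ² (1 + r²)^(α/2) ~ κ² r^α`. Normalising by `r^α`, the barrier
`c r^(α/2)` is a strict supersolution when `c² + (α/2) θ c > κ²` and a strict subsolution when
`c² + (α/2) θ c < κ²`, where `θ = lim r^(-(1 + α/2))` is `0` for `α > -2` and `1` for `α = -2`;
the positive root of `c² + (α/2) θ c = κ²` is `κ`, resp. `κ̄`. Because `∫ r^(α/2) = ∞`, `h` must
cross every such barrier, after which the comparison principle keeps it on the right side. Hence
`h ~ L r^(α/2)`, and integrating `(log g)' = h` gives the two limits.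
-/

open Filter Set Real Topology

lemma monotoneOn_Icc_of_hasDerivAt_nonneg {f f' : ℝ → ℝ} {a b : ℝ}
    (hf : ∀ x ∈ Icc a b, HasDerivAt f (f' x) x) (hf' : ∀ x ∈ Ioo a b, 0 ≤ f' x) :
    MonotoneOn f (Icc a b) :=
  monotoneOn_of_hasDerivWithinAt_nonneg (convex_Icc a b)
    (fun x hx => (hf x hx).continuousAt.continuousWithinAt)
    (fun x hx => (hf x (interior_subset hx)).hasDerivWithinAt)
    (fun x hx => hf' x (by rwa [interior_Icc] at hx))

lemma sub_le_sub_of_hasDerivAt_le {f g f' g' : ℝ → ℝ} {a b : ℝ} (hab : a ≤ b)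
    (hf : ∀ x ∈ Icc a b, HasDerivAt f (f' x) x) (hg : ∀ x ∈ Icc a b, HasDerivAt g (g' x) x)
    (hle : ∀ x ∈ Ioo a b, f' x ≤ g' x) : f b - f a ≤ g b - g a := by
  have := monotoneOn_Icc_of_hasDerivAt_nonneg (fun x hx => (hg x hx).sub (hf x hx))
    (fun x hx => sub_nonneg.2 (hle x hx)) (left_mem_Icc.2 hab) (right_mem_Icc.2 hab) hab
  simp only [Pi.sub_apply] at this
  linarith

lemma exists_forall_ge_sub_le_sub {f g f' g' : ℝ → ℝ}
    (hf : ∀ᶠ x in atTop, HasDerivAt f (f' x) x) (hg : ∀ᶠ x in atTop, HasDerivAt g (g' x) x)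
    (hle : ∀ᶠ x in atTop, f' x ≤ g' x) : ∃ s, ∀ x, s ≤ x → f x - f s ≤ g x - g s := by
  obtain ⟨s, hs⟩ := eventually_atTop.1 (hf.and (hg.and hle))
  exact ⟨s, fun x hx => sub_le_sub_of_hasDerivAt_le hx (fun y hy => (hs y hy.1).1)
    (fun y hy => (hs y hy.1).2.1) (fun y hy => (hs y hy.1.le).2.2)⟩

lemma tendsto_atTop_of_hasDerivAt_ge {f g f' g' : ℝ → ℝ}
    (hf : ∀ᶠ x in atTop, HasDerivAt f (f' x) x) (hg : ∀ᶠ x in atTop, HasDerivAt g (g' x) x)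
    (hle : ∀ᶠ x in atTop, f' x ≤ g' x) (hf_top : Tendsto f atTop atTop) :
    Tendsto g atTop atTop := by
  obtain ⟨s, hs⟩ := exists_forall_ge_sub_le_sub hf hg hle
  refine tendsto_atTop_mono' _ ?_ (tendsto_atTop_add_const_right _ (g s - f s) hf_top)
  filter_upwards [eventually_ge_atTop s] with x hx
  linarith [hs x hx]

lemma exists_antideriv_rpow_tendsto_atTop {γ : ℝ} (hγ : -1 ≤ γ) :
    ∃ P : ℝ → ℝ, (∀ x, 0 < x → HasDerivAt P (x ^ γ) x) ∧ Tendsto P atTop atTop := by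
  rcases hγ.eq_or_lt with rfl | hγ
  · exact ⟨log, fun x hx => by simpa [rpow_neg_one] using hasDerivAt_log hx.ne',
      tendsto_log_atTop⟩
  · refine ⟨fun x => x ^ (γ + 1) / (γ + 1), fun x hx => ?_,
      (tendsto_rpow_atTop (by linarith)).atTop_div_const (by linarith)⟩
    refine ((hasDerivAt_rpow_const (Or.inl hx.ne')).div_const (γ + 1)).congr_deriv ?_
    rw [add_sub_cancel_right, mul_div_cancel_left₀ _ (by linarith)]

lemma eventually_div_lt_of_deriv_le {F Φ f φ : ℝ → ℝ} {c b : ℝ} (hcb : c < b)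
    (hF : ∀ᶠ x in atTop, HasDerivAt F (f x) x) (hΦ : ∀ᶠ x in atTop, HasDerivAt Φ (φ x) x)
    (hΦ_top : Tendsto Φ atTop atTop) (hfφ : ∀ᶠ x in atTop, f x ≤ c * φ x) :
    ∀ᶠ x in atTop, F x / Φ x < b := by
  obtain ⟨s, hs⟩ := exists_forall_ge_sub_le_sub hF (hΦ.mono fun x hx => hx.const_mul c) hfφ
  have hrem : Tendsto (fun x => (F s - c * Φ s) / Φ x) atTop (𝓝 0) :=
    tendsto_const_nhds.div_atTop hΦ_top
  filter_upwards [eventually_ge_atTop s, hΦ_top.eventually_gt_atTop 0,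
    hrem.eventually_lt_const (sub_pos.2 hcb)] with x hsx hΦx hx
  rw [div_lt_iff₀ hΦx] at hx ⊢
  linarith [hs x hsx]

theorem tendsto_div_of_deriv_bounds {F Φ f φ : ℝ → ℝ} {L : ℝ}
    (hF : ∀ᶠ x in atTop, HasDerivAt F (f x) x) (hΦ : ∀ᶠ x in atTop, HasDerivAt Φ (φ x) x)
    (hΦ_top : Tendsto Φ atTop atTop)
    (hlow : ∀ᶠ c in 𝓝[<] L, ∀ᶠ x in atTop, c * φ x ≤ f x)
    (hup : ∀ᶠ c in 𝓝[>] L, ∀ᶠ x in atTop, f x ≤ c * φ x) :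
    Tendsto (fun x => F x / Φ x) atTop (𝓝 L) := by
  refine tendsto_order.2 ⟨fun b hb => ?_, fun b hb => ?_⟩
  · obtain ⟨c, hc, hbc, -⟩ := (hlow.and (Ioo_mem_nhdsLT hb)).exists
    have := eventually_div_lt_of_deriv_le (neg_lt_neg hbc) (hF.mono fun x hx => hx.neg) hΦ
      hΦ_top (hc.mono fun x hx => by linarith)
    filter_upwards [this] with x hx
    rw [Pi.neg_apply, neg_div] at hx
    linarith
  · obtain ⟨c, hc, -, hcb⟩ := (hup.and (Ioo_mem_nhdsGT hb)).exists
    exact eventually_div_lt_of_deriv_le hcb hF hΦ hΦ_top hc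

lemma eventually_le_of_frequently_le {u v u' v' : ℝ → ℝ}
    (hu : ∀ᶠ x in atTop, HasDerivAt u (u' x) x) (hv : ∀ᶠ x in atTop, HasDerivAt v (v' x) x)
    (htouch : ∀ᶠ x in atTop, u x = v x → u' x < v' x) (hfreq : ∃ᶠ x in atTop, u x ≤ v x) :
    ∀ᶠ x in atTop, u x ≤ v x := by
  obtain ⟨N, hN⟩ := eventually_atTop.1 (hu.and (hv.and htouch))
  obtain ⟨s, hsuv, hNs⟩ := (hfreq.and_eventually (eventually_ge_atTop N)).exists
  filter_upwards [eventually_ge_atTop s] with x hx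
  have hN' : ∀ y ∈ Icc s x, _ := fun y hy => hN y (hNs.trans hy.1)
  exact image_le_of_deriv_right_lt_deriv_boundary'
    (fun y hy => (hN' y hy).1.continuousAt.continuousWithinAt)
    (fun y hy => (hN' y (Ico_subset_Icc_self hy)).1.hasDerivWithinAt) hsuv
    (fun y hy => (hN' y hy).2.1.continuousAt.continuousWithinAt)
    (fun y hy => (hN' y (Ico_subset_Icc_self hy)).2.1.hasDerivWithinAt)
    (fun y hy => (hN' y (Ico_subset_Icc_self hy)).2.2) (right_mem_Icc.2 hx)

namespace Riccati

variable {q h p p' P : ℝ → ℝ} {δ : ℝ}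
  (hh : ∀ᶠ r in atTop, HasDerivAt h (q r - h r ^ 2) r) (h_pos : ∀ᶠ r in atTop, 0 < h r)
  (hp : ∀ᶠ r in atTop, HasDerivAt p (p' r) r) (hp_pos : ∀ᶠ r in atTop, 0 < p r)
  (hP : ∀ᶠ r in atTop, HasDerivAt P (p r) r) (hP_top : Tendsto P atTop atTop)
  (hδ : 0 < δ)
include hh h_pos hp hp_pos hP hP_top hδ

lemma frequently_le_of_supersolution (hq : ∀ᶠ r in atTop, 0 ≤ q r)
    (hsuper : ∀ᶠ r in atTop, q r + δ * p r ^ 2 ≤ p' r + p r ^ 2) :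
    ∃ᶠ r in atTop, h r ≤ p r := by
  by_contra hcon
  have hlt : ∀ᶠ r in atTop, p r < h r := (not_frequently.1 hcon).mono fun r hr => not_le.1 hr
  set ε := min δ 1
  have hε : 0 < ε := lt_min hδ one_pos
  -- `p / h` increases at least like `ε * P`, yet stays below `1`
  have hw : ∀ᶠ r in atTop, HasDerivAt (fun r => p r / h r)
      ((p' r * h r - p r * (q r - h r ^ 2)) / h r ^ 2) r := by
    filter_upwards [hp, hh, h_pos] with r hpr hhr hr
    exact hpr.div hhr hr.ne'
  have hw_top : Tendsto (fun r => p r / h r) atTop atTop := by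
    refine tendsto_atTop_of_hasDerivAt_ge (hP.mono fun r hr => hr.const_mul ε) hw ?_
      (hP_top.const_mul_atTop hε)
    filter_upwards [hq, hsuper, hlt, hp_pos, h_pos] with r hqr hsr hlr hpr hr
    rw [le_div_iff₀ (by positivity)]
    have hε1 : 0 ≤ 1 - ε := sub_nonneg.2 (min_le_right δ 1)
    have h1 : q r ≤ p' r + (1 - ε) * p r ^ 2 := by nlinarith [min_le_left δ 1]
    -- the numerator exceeds `ε p h²` by at least `(h - p) (p' + (1 - ε) p (h + p))`
    have h2 : 0 ≤ p' r + (1 - ε) * p r * (h r + p r) := by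
      nlinarith [mul_nonneg hε1 (mul_nonneg hpr.le hr.le)]
    nlinarith [mul_nonneg (sub_nonneg.2 hlr.le) h2, mul_le_mul_of_nonneg_left h1 hpr.le]
  obtain ⟨r, hr1, hlr, hr⟩ := ((hw_top.eventually_ge_atTop 1).and (hlt.and h_pos)).exists
  rw [le_div_iff₀ hr] at hr1
  linarith

lemma frequently_ge_of_subsolution (hsub₀ : ∀ᶠ r in atTop, δ * p r ^ 2 ≤ q r)
    (hsub₁ : ∀ᶠ r in atTop, p' r + p r ^ 2 + δ * p r ^ 2 ≤ q r) :
    ∃ᶠ r in atTop, p r ≤ h r := by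
  by_contra hcon
  have hlt : ∀ᶠ r in atTop, h r < p r := (not_frequently.1 hcon).mono fun r hr => not_le.1 hr
  -- `h / p` increases at least like `δ * P`, yet stays below `1`
  have hv : ∀ᶠ r in atTop, HasDerivAt (fun r => h r / p r)
      (((q r - h r ^ 2) * p r - h r * p' r) / p r ^ 2) r := by
    filter_upwards [hp, hh, hp_pos] with r hpr hhr hr
    exact hhr.div hpr hr.ne'
  have hv_top : Tendsto (fun r => h r / p r) atTop atTop := by
    refine tendsto_atTop_of_hasDerivAt_ge (hP.mono fun r hr => hr.const_mul δ) hv ?_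
      (hP_top.const_mul_atTop hδ)
    filter_upwards [hsub₀, hsub₁, hlt, hp_pos, h_pos] with r h0 h1 hlr hpr hr
    rw [le_div_iff₀ (by positivity)]
    -- `x p` is a subsolution with margin `δ p²` for `x = 0, 1`, hence for `x = h / p ∈ [0, 1]`
    nlinarith [mul_le_mul_of_nonneg_left h1 hr.le,
      mul_le_mul_of_nonneg_left h0 (sub_nonneg.2 hlr.le),
      mul_le_mul_of_nonneg_left hlr.le (mul_nonneg hr.le hpr.le)]
  obtain ⟨r, hr1, hlr, hpr⟩ := ((hv_top.eventually_ge_atTop 1).and (hlt.and hp_pos)).exists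
  rw [le_div_iff₀ hpr] at hr1
  linarith

theorem eventually_le_of_supersolution (hq : ∀ᶠ r in atTop, 0 ≤ q r)
    (hsuper : ∀ᶠ r in atTop, q r + δ * p r ^ 2 ≤ p' r + p r ^ 2) :
    ∀ᶠ r in atTop, h r ≤ p r := by
  refine eventually_le_of_frequently_le hh hp ?_
    (frequently_le_of_supersolution hh h_pos hp hp_pos hP hP_top hδ hq hsuper)
  filter_upwards [hsuper, hp_pos] with r hsr hpr hhp
  rw [hhp]
  nlinarith [mul_pos hδ (pow_pos hpr 2)]

theorem eventually_ge_of_subsolution (hsub₀ : ∀ᶠ r in atTop, δ * p r ^ 2 ≤ q r)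
    (hsub₁ : ∀ᶠ r in atTop, p' r + p r ^ 2 + δ * p r ^ 2 ≤ q r) :
    ∀ᶠ r in atTop, p r ≤ h r := by
  refine eventually_le_of_frequently_le hp hh ?_
    (frequently_ge_of_subsolution hh h_pos hp hp_pos hP hP_top hδ hsub₀ hsub₁)
  filter_upwards [hsub₁, hp_pos] with r hsr hpr hhp
  rw [← hhp]
  nlinarith [mul_pos hδ (pow_pos hpr 2)]

end Riccati

lemma hasDerivAt_div_of_jacobi {q g g' : ℝ → ℝ} {r : ℝ} (hg : HasDerivAt g (g' r) r)
    (hg' : HasDerivAt g' (q r * g r) r) (hr : g r ≠ 0) :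
    HasDerivAt (fun s => g' s / g s) (q r - (g' r / g r) ^ 2) r :=
  (hg'.div hg hr).congr_deriv (by field_simp)

section Jacobi

variable {q g g' : ℝ → ℝ} (hq : ∀ r, 0 ≤ r → 0 ≤ q r)
  (hg : ∀ r, 0 ≤ r → HasDerivAt g (g' r) r) (hg' : ∀ r, 0 ≤ r → HasDerivAt g' (q r * g r) r)
  (hg0 : 0 ≤ g 0) (hg'0 : 0 < g' 0)
include hq hg hg' hg0 hg'0

lemma deriv_pos_of_jacobi {b : ℝ} (hb : 0 ≤ b) : 0 < g' b := by
  by_contra hgb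
  set Z := Icc 0 b ∩ g' ⁻¹' Iic 0
  have hZ : IsClosed Z := ContinuousOn.preimage_isClosed_of_isClosed
    (fun x hx => (hg' x hx.1).continuousAt.continuousWithinAt) isClosed_Icc isClosed_Iic
  have hZ_bdd : BddBelow Z := ⟨0, fun x hx => hx.1.1⟩
  set m := sInf Z
  have hmZ : m ∈ Z := hZ.csInf_mem ⟨b, ⟨hb, le_rfl⟩, not_lt.1 hgb⟩ hZ_bdd
  have hm0 : 0 ≤ m := hmZ.1.1
  -- `m` is the first zero of `g'`: before it `g ≥ 0`, so `g'' = q g ≥ 0` and `g' m ≥ g' 0 > 0`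
  have hg'_pos : ∀ x ∈ Ico 0 m, 0 < g' x := fun x hx => by
    by_contra hx'
    exact (csInf_le hZ_bdd ⟨⟨hx.1, hx.2.le.trans hmZ.1.2⟩, not_lt.1 hx'⟩).not_gt hx.2
  have hg_nonneg : ∀ x ∈ Icc 0 m, 0 ≤ g x := fun x hx =>
    hg0.trans (monotoneOn_Icc_of_hasDerivAt_nonneg (fun y hy => hg y hy.1)
      (fun y hy => (hg'_pos y ⟨hy.1.le, hy.2⟩).le) (left_mem_Icc.2 hm0) hx hx.1)
  have := monotoneOn_Icc_of_hasDerivAt_nonneg (fun y hy => hg' y hy.1)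
    (fun y hy => mul_nonneg (hq y hy.1.le) (hg_nonneg y (Ioo_subset_Icc_self hy)))
    (left_mem_Icc.2 hm0) (right_mem_Icc.2 hm0) hm0
  have hg'm : g' m ≤ 0 := hmZ.2
  linarith

lemma pos_of_jacobi {r : ℝ} (hr : 0 < r) : 0 < g r := by
  obtain ⟨x, hx, hgx⟩ := exists_hasDerivAt_eq_slope g g' hr
    (fun y hy => (hg y hy.1).continuousAt.continuousWithinAt) (fun y hy => hg y hy.1.le)
  have := deriv_pos_of_jacobi hq hg hg' hg0 hg'0 hx.1.le
  rw [hgx, sub_zero, div_pos_iff_of_pos_right hr] at this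
  linarith

theorem eventually_riccati_of_jacobi :
    (∀ᶠ r in atTop, HasDerivAt (fun r => log (g r)) (g' r / g r) r) ∧
    (∀ᶠ r in atTop, HasDerivAt (fun r => g' r / g r) (q r - (g' r / g r) ^ 2) r) ∧
    ∀ᶠ r in atTop, 0 < g' r / g r := by
  have hg_pos : ∀ᶠ r in atTop, 0 < g r := by
    filter_upwards [eventually_gt_atTop 0] with r hr
    exact pos_of_jacobi hq hg hg' hg0 hg'0 hr
  refine ⟨?_, ?_, ?_⟩ <;> filter_upwards [eventually_gt_atTop 0, hg_pos] with r hr hgr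
  · exact (hg r hr.le).log hgr.ne'
  · exact hasDerivAt_div_of_jacobi (hg r hr.le) (hg' r hr.le) hgr.ne'
  · exact div_pos (deriv_pos_of_jacobi hq hg hg' hg0 hg'0 hr.le) hgr

end Jacobi

section Model

lemma mul_rpow_half_sq (c α : ℝ) {r : ℝ} (hr : 0 < r) :
    (c * r ^ (α / 2)) ^ 2 = c ^ 2 * r ^ α := by
  rw [mul_pow, ← rpow_mul_natCast hr.le]
  norm_num

lemma rpow_half_sub_one (α : ℝ) {r : ℝ} (hr : 0 < r) :
    r ^ (α / 2 - 1) = r ^ (-(1 + α / 2)) * r ^ α := by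
  rw [← rpow_add hr]
  ring_nf

lemma tendsto_jacobiCoeff_div_rpow (κ α : ℝ) :
    Tendsto (fun r : ℝ => κ ^ 2 * (1 + r ^ 2) ^ (α / 2) / r ^ α) atTop (𝓝 (κ ^ 2)) := by
  have hlim : Tendsto (fun r : ℝ => κ ^ 2 * ((r ^ 2)⁻¹ + 1) ^ (α / 2)) atTop (𝓝 (κ ^ 2)) := by
    have := ((tendsto_inv_atTop_zero.comp (tendsto_pow_atTop two_ne_zero)).add_const
      (1 : ℝ)).rpow_const (p := α / 2) (Or.inl (by norm_num))
    simpa using this.const_mul (κ ^ 2)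
  refine hlim.congr' ?_
  filter_upwards [eventually_gt_atTop 0] with r hr
  have hrα : r ^ α = (r ^ 2) ^ (α / 2) := by
    rw [← rpow_natCast_mul hr.le]
    ring_nf
  rw [hrα, mul_div_assoc, ← div_rpow (by positivity) (by positivity), add_div,
    div_self (by positivity), one_div, add_comm]

lemma rpow_barrier {α c : ℝ} (hα : -2 ≤ α) (hc : 0 < c) :
    (∀ᶠ r in atTop, HasDerivAt (fun r => c * r ^ (α / 2)) (c * (α / 2 * r ^ (α / 2 - 1))) r) ∧
    (∀ᶠ r in atTop, 0 < c * r ^ (α / 2)) ∧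
    ∃ P : ℝ → ℝ, (∀ᶠ r in atTop, HasDerivAt P (c * r ^ (α / 2)) r) ∧ Tendsto P atTop atTop := by
  obtain ⟨P, hP, hP_top⟩ := exists_antideriv_rpow_tendsto_atTop (γ := α / 2) (by linarith)
  refine ⟨?_, ?_, fun r => c * P r, ?_, hP_top.const_mul_atTop hc⟩ <;>
    filter_upwards [eventually_gt_atTop 0] with r hr
  · exact (hasDerivAt_rpow_const (Or.inl hr.ne')).const_mul c
  · positivity
  · exact (hP r hr).const_mul c

variable {κ α θ L : ℝ} {h : ℝ → ℝ}
  (hα : -2 ≤ α) (hθ : Tendsto (fun r : ℝ => r ^ (-(1 + α / 2))) atTop (𝓝 θ))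
  (hL : 0 < L) (hLθ : L ^ 2 + α / 2 * θ * L = κ ^ 2)
  (hh : ∀ᶠ r in atTop, HasDerivAt h (κ ^ 2 * (1 + r ^ 2) ^ (α / 2) - h r ^ 2) r)
  (h_pos : ∀ᶠ r in atTop, 0 < h r)
include hα hθ hL hLθ hh h_pos

theorem eventually_le_mul_rpow_of_riccati {c : ℝ} (hc : L < c) :
    ∀ᶠ r in atTop, h r ≤ c * r ^ (α / 2) := by
  have hc0 : 0 < c := hL.trans hc
  set D := c ^ 2 + α / 2 * θ * c - κ ^ 2 with hD_def
  -- `D = (c - L) (c + L + (α/2) θ)`, and `L + (α/2) θ = κ² / L ≥ 0`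
  have hLθ' : 0 ≤ L + α / 2 * θ := by nlinarith [sq_nonneg κ]
  have hD : 0 < D := by nlinarith
  set δ := D / (2 * c ^ 2)
  have hδc : δ * c ^ 2 = D / 2 := by simp only [δ]; field_simp
  obtain ⟨hp, hp_pos, P, hP, hP_top⟩ := rpow_barrier hα hc0
  refine Riccati.eventually_le_of_supersolution hh h_pos hp hp_pos hP hP_top (δ := δ)
    (by positivity) (Eventually.of_forall fun r => by positivity) ?_
  filter_upwards [((tendsto_jacobiCoeff_div_rpow κ α).add_const (δ * c ^ 2)).eventually_lt
    ((hθ.const_mul (c * (α / 2))).add_const (c ^ 2)) (by linarith),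
    eventually_gt_atTop 0] with r hlim hr
  have hrα : 0 < r ^ α := rpow_pos_of_pos hr α
  rw [mul_rpow_half_sq c α hr, rpow_half_sub_one α hr,
    ← div_mul_cancel₀ (κ ^ 2 * (1 + r ^ 2) ^ (α / 2)) hrα.ne']
  nlinarith [mul_lt_mul_of_pos_right hlim hrα]

theorem eventually_mul_rpow_le_of_riccati (hκ : κ ≠ 0) {c : ℝ} (hc0 : 0 < c) (hc : c < L) :
    ∀ᶠ r in atTop, c * r ^ (α / 2) ≤ h r := by
  set D := c ^ 2 + α / 2 * θ * c - κ ^ 2 with hD_def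
  have hLθ' : 0 ≤ L + α / 2 * θ := by nlinarith [sq_nonneg κ]
  have hD : D < 0 := by nlinarith
  set m := min (κ ^ 2) (-D)
  have hm : 0 < m := lt_min (by positivity) (by linarith)
  set δ := m / (2 * c ^ 2)
  have hδc : δ * c ^ 2 = m / 2 := by simp only [δ]; field_simp
  obtain ⟨hp, hp_pos, P, hP, hP_top⟩ := rpow_barrier hα hc0
  refine Riccati.eventually_ge_of_subsolution hh h_pos hp hp_pos hP hP_top (δ := δ)
    (by positivity) ?_ ?_
  · filter_upwards [tendsto_const_nhds.eventually_lt (tendsto_jacobiCoeff_div_rpow κ α)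
      (show δ * c ^ 2 < κ ^ 2 by linarith [min_le_left (κ ^ 2) (-D)]),
      eventually_gt_atTop 0] with r hlim hr
    have hrα : 0 < r ^ α := rpow_pos_of_pos hr α
    rw [mul_rpow_half_sq c α hr, ← div_mul_cancel₀ (κ ^ 2 * (1 + r ^ 2) ^ (α / 2)) hrα.ne']
    nlinarith [mul_lt_mul_of_pos_right hlim hrα]
  · filter_upwards [(((hθ.const_mul (c * (α / 2))).add_const (c ^ 2)).add_const
      (δ * c ^ 2)).eventually_lt (tendsto_jacobiCoeff_div_rpow κ α)
      (by linarith [min_le_right (κ ^ 2) (-D)]), eventually_gt_atTop 0] with r hlim hr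
    have hrα : 0 < r ^ α := rpow_pos_of_pos hr α
    rw [mul_rpow_half_sq c α hr, rpow_half_sub_one α hr,
      ← div_mul_cancel₀ (κ ^ 2 * (1 + r ^ 2) ^ (α / 2)) hrα.ne']
    nlinarith [mul_lt_mul_of_pos_right hlim hrα]

end Model

theorem tendsto_div_rpow_of_riccati {κ α : ℝ} {F h : ℝ → ℝ} (hκ : 0 < κ) (hα : -2 < α)
    (hF : ∀ᶠ r in atTop, HasDerivAt F (h r) r)
    (hh : ∀ᶠ r in atTop, HasDerivAt h (κ ^ 2 * (1 + r ^ 2) ^ (α / 2) - h r ^ 2) r)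
    (h_pos : ∀ᶠ r in atTop, 0 < h r) :
    Tendsto (fun r => F r / r ^ (1 + α / 2)) atTop (𝓝 (2 * κ / (2 + α))) := by
  have hβ : 0 < 1 + α / 2 := by linarith
  have hθ := tendsto_rpow_neg_atTop hβ
  have hLθ : κ ^ 2 + α / 2 * 0 * κ = κ ^ 2 := by ring
  rw [show 2 * κ / (2 + α) = κ / (1 + α / 2) by field_simp]
  refine tendsto_div_of_deriv_bounds hF (φ := fun r => (1 + α / 2) * r ^ (α / 2)) ?_
    (tendsto_rpow_atTop hβ) ?_ ?_
  · filter_upwards [eventually_gt_atTop 0] with r hr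
    simpa using hasDerivAt_rpow_const (p := 1 + α / 2) (Or.inl hr.ne')
  · filter_upwards [Ioo_mem_nhdsLT (div_pos hκ hβ)] with c hc
    filter_upwards [eventually_mul_rpow_le_of_riccati hα.le hθ hκ hLθ hh h_pos hκ.ne'
      (mul_pos hc.1 hβ) ((lt_div_iff₀ hβ).1 hc.2)] with r hr
    rwa [mul_assoc] at hr
  · filter_upwards [self_mem_nhdsWithin] with c (hc : κ / (1 + α / 2) < c)
    filter_upwards [eventually_le_mul_rpow_of_riccati hα.le hθ hκ hLθ hh h_pos
      ((div_lt_iff₀ hβ).1 hc)] with r hr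
    rwa [mul_assoc] at hr

theorem tendsto_div_log_of_riccati {κ α : ℝ} {F h : ℝ → ℝ} (hκ : κ ≠ 0) (hα : α = -2)
    (hF : ∀ᶠ r in atTop, HasDerivAt F (h r) r)
    (hh : ∀ᶠ r in atTop, HasDerivAt h (κ ^ 2 * (1 + r ^ 2) ^ (α / 2) - h r ^ 2) r)
    (h_pos : ∀ᶠ r in atTop, 0 < h r) :
    Tendsto (fun r => F r / log r) atTop (𝓝 ((1 + √(1 + 4 * κ ^ 2)) / 2)) := by
  have hθ : Tendsto (fun r : ℝ => r ^ (-(1 + α / 2))) atTop (𝓝 1) := by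
    simp [hα]
  have hK : 0 < (1 + √(1 + 4 * κ ^ 2)) / 2 := by positivity
  have hKθ : ((1 + √(1 + 4 * κ ^ 2)) / 2) ^ 2 + α / 2 * 1 * ((1 + √(1 + 4 * κ ^ 2)) / 2)
      = κ ^ 2 := by
    rw [hα]
    linear_combination sq_sqrt (show (0 : ℝ) ≤ 1 + 4 * κ ^ 2 by positivity) / 4
  refine tendsto_div_of_deriv_bounds hF (φ := fun r => r ^ (α / 2)) ?_ tendsto_log_atTop ?_ ?_
  · filter_upwards [eventually_gt_atTop 0] with r hr
    simpa [hα, rpow_neg_one] using hasDerivAt_log hr.ne'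
  · filter_upwards [Ioo_mem_nhdsLT hK] with c hc
    exact eventually_mul_rpow_le_of_riccati hα.ge hθ hK hKθ hh h_pos hκ hc.1 hc.2
  · filter_upwards [self_mem_nhdsWithin] with c hc
    exact eventually_le_mul_rpow_of_riccati hα.ge hθ hK hKθ hh h_pos hc

theorem jacobi_ode_asymptotics_general (κ α : ℝ) (hκ : 0 < κ)
    (g g' : ℝ → ℝ)
    (hg : ∀ r, 0 ≤ r → HasDerivAt g (g' r) r)
    (hg' : ∀ r, 0 ≤ r → HasDerivAt g' (κ ^ 2 * (1 + r ^ 2) ^ (α / 2) * g r) r)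
    (hg0 : g 0 = 0) (hg'0 : g' 0 = 1) :
    (-2 < α → Filter.Tendsto (fun r => Real.log (g r) / r ^ (1 + α / 2)) Filter.atTop
      (nhds (2 * κ / (2 + α)))) ∧
    (α = -2 → Filter.Tendsto (fun r => Real.log (g r) / Real.log r) Filter.atTop
      (nhds ((1 + Real.sqrt (1 + 4 * κ ^ 2)) / 2))) := by
  obtain ⟨hlog, hh, h_pos⟩ := eventually_riccati_of_jacobi
    (q := fun r => κ ^ 2 * (1 + r ^ 2) ^ (α / 2)) (fun r _ => by positivity) hg hg' hg0.ge
    (hg'0 ▸ one_pos)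
  exact ⟨fun hα => tendsto_div_rpow_of_riccati hκ hα hlog hh h_pos,
    fun hα => tendsto_div_log_of_riccati hκ.ne' hα hlog hh h_pos⟩

/-- Asymptotics for the Jacobi-type ODE `g'' = κ²(1+r²)^{α/2} g`,
`g(0)=0`, `g'(0)=1`, with `κ > 0`, `α ≥ −2`: if `α > −2` then
`log g(r) / r^{1+α/2} → 2κ/(2+α)`; if `α = −2` then
`log g(r)/log r → κ̄ = (1+√(1+4κ²))/2` as `r → ∞`. -/
theorem jacobi_ode_asymptotics (κ α : ℝ) (hκ : 0 < κ) (hα : -2 ≤ α)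
    (g g' : ℝ → ℝ)
    (hg : ∀ r, 0 ≤ r → HasDerivAt g (g' r) r)
    (hg' : ∀ r, 0 ≤ r → HasDerivAt g' (κ ^ 2 * (1 + r ^ 2) ^ (α / 2) * g r) r)
    (hg0 : g 0 = 0) (hg'0 : g' 0 = 1) :
    (-2 < α → Filter.Tendsto (fun r => Real.log (g r) / r ^ (1 + α / 2)) Filter.atTop
      (nhds (2 * κ / (2 + α)))) ∧
    (α = -2 → Filter.Tendsto (fun r => Real.log (g r) / Real.log r) Filter.atTop
      (nhds ((1 + Real.sqrt (1 + 4 * κ ^ 2)) / 2))) :=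
  jacobi_ode_asymptotics_general κ α hκ g g' hg hg' hg0 hg'0
end
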